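/- For every pair (p₁, p₂) ∈ R², it is not the case that both the first and the second coordinate of ψ − A(p₁, p₂) lie in the image of the structure map ℂ → R (i.e. are constant multiples of 1). In other words, no cocycle cohomologous to ψ has its first two coordinates constant. -/

import Mathlib

/-!
The first coordinate of `ψ - A p` being a constant `c` forces `p₁ = x² - c`. Using `x³ = x²`,
the second coordinate is then `-(3x² - 2x)(x² - c) = -((1 - 3c)x² + 2cx)`. As `1, x, x²` are
linearly independent over `ℂ` in `R` (a polynomial of degree `< 3` divisible by `X³ - X²`
is zero), this is constant only if `2c = 0` and `1 - 3c = 0`, which is absurd.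
-/

open Polynomial

/-- The ring `R = ℂ[X]/(X³ - X²)`. -/
noncomputable abbrev R3 : Type :=
  Polynomial ℂ ⧸ Ideal.span {(X : Polynomial ℂ) ^ 3 - X ^ 2}

/-- The class `x` of `X` in `R = ℂ[X]/(X³ - X²)`. -/
noncomputable def xR : R3 :=
  Ideal.Quotient.mk (Ideal.span {(X : Polynomial ℂ) ^ 3 - X ^ 2}) X

/-- The differential `∂⁻¹ : R² → R⁵`. -/
noncomputable def Amap (p : R3 × R3) : Fin 5 → R3 :=
  ![p.1,
    (3 * xR ^ 2 - 2 * xR) * p.1,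
    (9 * xR - 1) * p.1 + (3 * xR ^ 2 - 2 * xR) * p.2,
    p.2,
    (3 * xR ^ 2 - 2 * xR) * p.2]

/-- The differential `∂⁰ : R⁵ → R²`. -/
noncomputable def Bmap (v : Fin 5 → R3) : R3 × R3 :=
  ((9 * xR - 1) * v 0 - v 2 + (3 * xR ^ 2 - 2 * xR) * v 3,
   (9 * xR - 1) * v 1 - (3 * xR ^ 2 - 2 * xR) * v 2 + (3 * xR ^ 2 - 2 * xR) * v 4)

/-- The Gornik cocycle `ψ = (x², 0, 0, -8x², 0) ∈ R⁵`. -/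
noncomputable def psi : Fin 5 → R3 :=
  ![xR ^ 2, 0, 0, -8 * xR ^ 2, 0]

theorem xR_pow_three : xR ^ 3 = xR ^ 2 := by
  rw [xR, ← map_pow, ← map_pow, Ideal.Quotient.eq, Ideal.mem_span_singleton]

theorem eq_zero_of_quadratic_xR_eq_zero {a b c : ℂ}
    (h : algebraMap ℂ R3 a * xR ^ 2 + algebraMap ℂ R3 b * xR + algebraMap ℂ R3 c = 0) :
    a = 0 ∧ b = 0 ∧ c = 0 := by
  have hmk : Ideal.Quotient.mk (Ideal.span {(X : ℂ[X]) ^ 3 - X ^ 2})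
      (C a * X ^ 2 + C b * X + C c) = 0 := by
    simpa only [map_add, map_mul, map_pow, C_eq_algebraMap, Ideal.Quotient.mk_algebraMap, xR]
      using h
  have hdeg : (C a * X ^ 2 + C b * X + C c).degree < (X ^ 3 - X ^ 2 : ℂ[X]).degree := by
    calc (C a * X ^ 2 + C b * X + C c).degree ≤ (2 : WithBot ℕ) := by compute_degree
      _ < 3 := by decide
      _ = (X ^ 3 - X ^ 2 : ℂ[X]).degree := by symm; compute_degree!
  have hq := eq_zero_of_dvd_of_degree_lt
    (Ideal.mem_span_singleton.mp (Ideal.Quotient.eq_zero_iff_mem.mp hmk)) hdeg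
  refine ⟨?_, ?_, ?_⟩
  · simpa using congrArg (coeff · 2) hq
  · simpa using congrArg (coeff · 1) hq
  · simpa using congrArg (coeff · 0) hq

/-- No cocycle cohomologous to `ψ` has both of its first two coordinates constant,
i.e. in the image of the structure map `ℂ → R`. -/
theorem no_constant_representative :
    ∀ p : R3 × R3,
      ¬ ((psi - Amap p) 0 ∈ Set.range (algebraMap ℂ R3) ∧
         (psi - Amap p) 1 ∈ Set.range (algebraMap ℂ R3)) := by
  rintro ⟨p₁, _⟩ ⟨⟨c, hc⟩, ⟨d, hd⟩⟩
  simp only [Pi.sub_apply, psi, Amap, Matrix.cons_val_zero, Matrix.cons_val_one] at hc hd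
  have hquad : algebraMap ℂ R3 (1 - 3 * c) * xR ^ 2 + algebraMap ℂ R3 (2 * c) * xR
      + algebraMap ℂ R3 d = 0 := by
    simp only [map_sub, map_mul, map_one, map_ofNat]
    linear_combination hd - (3 * xR ^ 2 - 2 * xR) * hc - (3 * xR + 1) * xR_pow_three
  obtain ⟨hsq, hlin, -⟩ := eq_zero_of_quadratic_xR_eq_zero hquad
  exact one_ne_zero (by linear_combination hsq + 3 / 2 * hlin : (1 : ℂ) = 0)
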